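/- Let g, ĝ : [a,b] → ℝ be C¹ with derivatives Lipschitz of constants M_g, M_ĝ, and let a = t_0 < t_1 < ... < t_N = b be a uniform grid of spacing h on which both values and derivatives of g and ĝ agree. Then sup_{t∈[a,b]} |ĝ(t) − g(t)| ≤ (M_g + M_ĝ)h²/8. -/

import Mathlib

/-!
Let `x` be the grid point nearest to `t`, so `|t - x| ≤ h / 2`. The error `e = ĝ - g` vanishes to
first order at `x` and `e'` is `(M_g + M_ĝ)`-Lipschitz, so `|e'(s)| ≤ (M_g + M_ĝ) |s - x|`;
comparing `e` with the barrier `(M_g + M_ĝ) (s - x)² / 2` gives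
`|e(t)| ≤ (M_g + M_ĝ) (t - x)² / 2 ≤ (M_g + M_ĝ) h² / 8`.
-/

open Set

theorem norm_le_of_norm_deriv_le_mul_abs_sub {E : Type*} [NormedAddCommGroup E]
    [NormedSpace ℝ E] {f : ℝ → E} {M x : ℝ} (hf : Differentiable ℝ f) (hfx : f x = 0)
    (bound : ∀ s, ‖deriv f s‖ ≤ M * |s - x|) (t : ℝ) :
    ‖f t‖ ≤ M / 2 * (t - x) ^ 2 := by
  have right : ∀ {f : ℝ → E} {x : ℝ}, Differentiable ℝ f → f x = 0 →
      (∀ s, ‖deriv f s‖ ≤ M * |s - x|) →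
      ∀ t, x ≤ t → ‖f t‖ ≤ M / 2 * (t - x) ^ 2 := by
    intro f x hf hfx bound t hxt
    refine image_norm_le_of_norm_deriv_right_le_deriv_boundary
      (B := fun s => M / 2 * (s - x) ^ 2) (B' := fun s => M * (s - x))
      hf.continuous.continuousOn (fun s _ => (hf s).hasDerivAt.hasDerivWithinAt)
      (by simp [hfx]) (fun s => ?_) (fun s hs => ?_) ⟨hxt, le_rfl⟩
    · exact ((((hasDerivAt_id' s).sub_const x).fun_pow 2).const_mul (M / 2)).congr_deriv
        (by push_cast; ring)
    · simpa only [abs_of_nonneg (sub_nonneg.2 hs.1)] using bound s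
  rcases le_total x t with hxt | htx
  · exact right hf hfx bound t hxt
  · have hreflect := right (f := fun s => f (-s)) (x := -x) (hf.comp differentiable_neg)
      (by simpa using hfx)
      (fun s => by simpa [deriv_comp_neg, abs_sub_comm, add_comm] using bound (-s))
      (-t) (neg_le_neg htx)
    rw [neg_neg] at hreflect
    convert hreflect using 2
    ring

theorem abs_sub_le_of_deriv_eq_of_lipschitz {f g : ℝ → ℝ} {Mf Mg x : ℝ}
    (hf : Differentiable ℝ f) (hg : Differentiable ℝ g)
    (hMf : ∀ s, |deriv f s - deriv f x| ≤ Mf * |s - x|)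
    (hMg : ∀ s, |deriv g s - deriv g x| ≤ Mg * |s - x|)
    (hval : f x = g x) (hder : deriv f x = deriv g x) (t : ℝ) :
    |f t - g t| ≤ (Mf + Mg) / 2 * (t - x) ^ 2 := by
  refine norm_le_of_norm_deriv_le_mul_abs_sub (f := fun s => f s - g s) (hf.sub hg)
    (sub_eq_zero.2 hval) (fun s => ?_) t
  rw [Real.norm_eq_abs, deriv_fun_sub (hf s) (hg s)]
  calc |deriv f s - deriv g s|
      = |(deriv f s - deriv f x) - (deriv g s - deriv g x)| := by rw [hder]; ring_nf
    _ ≤ |deriv f s - deriv f x| + |deriv g s - deriv g x| := abs_sub _ _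
    _ ≤ (Mf + Mg) * |s - x| := by linarith [hMf s, hMg s]

theorem exists_nat_le_abs_sub_le_half {u : ℝ} {N : ℕ} (hu : u ∈ Icc 0 (N : ℝ)) :
    ∃ i ≤ N, |u - i| ≤ 1 / 2 := by
  have hle : (⌊u + 1 / 2⌋₊ : ℝ) ≤ u + 1 / 2 := Nat.floor_le (by linarith [hu.1])
  have hlt : u + 1 / 2 < ⌊u + 1 / 2⌋₊ + 1 := Nat.lt_floor_add_one _
  refine ⟨⌊u + 1 / 2⌋₊, Nat.lt_succ_iff.1 ?_, abs_le.2 ⟨by linarith, by linarith⟩⟩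
  exact (Nat.floor_lt (by linarith [hu.1])).2 (by push_cast; linarith [hu.2])

theorem exists_nat_le_abs_sub_add_mul_le_half {a h t : ℝ} {N : ℕ} (hh : 0 ≤ h)
    (ht : t ∈ Icc a (a + N * h)) : ∃ i ≤ N, |t - (a + i * h)| ≤ h / 2 := by
  rcases hh.eq_or_lt with rfl | hpos
  · exact ⟨0, N.zero_le, by simp [le_antisymm (by simpa using ht.2) ht.1]⟩
  obtain ⟨i, hiN, hi⟩ := exists_nat_le_abs_sub_le_half (u := (t - a) / h) (N := N)
    ⟨div_nonneg (by linarith [ht.1]) hh, (div_le_iff₀ hpos).2 (by linarith [ht.2])⟩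
  refine ⟨i, hiN, ?_⟩
  have hscale : t - (a + i * h) = h * ((t - a) / h - i) := by field_simp; ring
  rw [hscale, abs_mul, abs_of_pos hpos]
  linarith [mul_le_mul_of_nonneg_left hi hpos.le]

theorem sobolev_uniform_grid_general (a b : ℝ) (N : ℕ) (hN : 0 < N)
    (h : ℝ) (hh : h = (b - a) / N)
    (g ghat : ℝ → ℝ) (hg : ContDiff ℝ 1 g) (hghat : ContDiff ℝ 1 ghat)
    (Mg Mghat : ℝ)
    (hMg : ∀ x y : ℝ, |deriv g x - deriv g y| ≤ Mg * |x - y|)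
    (hMghat : ∀ x y : ℝ, |deriv ghat x - deriv ghat y| ≤ Mghat * |x - y|)
    (hval : ∀ i : ℕ, i ≤ N → ghat (a + i * h) = g (a + i * h))
    (hder : ∀ i : ℕ, i ≤ N → deriv ghat (a + i * h) = deriv g (a + i * h)) :
    ∀ t ∈ Set.Icc a b, |ghat t - g t| ≤ (Mg + Mghat) * h ^ 2 / 8 := by
  intro t ht
  have hb : b = a + N * h := by
    rw [hh]; field_simp [(Nat.cast_pos.2 hN).ne']; ring
  have hh0 : 0 ≤ h := hh ▸ div_nonneg (by linarith [ht.1, ht.2]) N.cast_nonneg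
  obtain ⟨i, hiN, hti⟩ := exists_nat_le_abs_sub_add_mul_le_half hh0 (hb ▸ ht)
  have hMg0 : 0 ≤ Mg := (abs_nonneg _).trans (by simpa using hMg 1 0)
  have hMghat0 : 0 ≤ Mghat := (abs_nonneg _).trans (by simpa using hMghat 1 0)
  have hsq : (t - (a + i * h)) ^ 2 ≤ (h / 2) ^ 2 := sq_le_sq' (abs_le.1 hti).1 (abs_le.1 hti).2
  calc |ghat t - g t|
      ≤ (Mghat + Mg) / 2 * (t - (a + i * h)) ^ 2 :=
        abs_sub_le_of_deriv_eq_of_lipschitz (hghat.differentiable one_ne_zero)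
          (hg.differentiable one_ne_zero) (fun s => hMghat s _) (fun s => hMg s _)
          (hval i hiN) (hder i hiN) t
    _ ≤ (Mg + Mghat) / 2 * (h / 2) ^ 2 := by rw [add_comm Mghat]; gcongr
    _ = (Mg + Mghat) * h ^ 2 / 8 := by ring

/-- One-dimensional Sobolev guarantee on a uniform grid: matching values and derivatives
at grid points spaced h apart yields uniform error (M_g + M_ĝ)h²/8 on [a,b]. -/
theorem sobolev_uniform_grid (a b : ℝ) (hab : a < b) (N : ℕ) (hN : 0 < N)
    (h : ℝ) (hh : h = (b - a) / N)
    (g ghat : ℝ → ℝ) (hg : ContDiff ℝ 1 g) (hghat : ContDiff ℝ 1 ghat)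
    (Mg Mghat : ℝ)
    (hMg : ∀ x y : ℝ, |deriv g x - deriv g y| ≤ Mg * |x - y|)
    (hMghat : ∀ x y : ℝ, |deriv ghat x - deriv ghat y| ≤ Mghat * |x - y|)
    (hval : ∀ i : ℕ, i ≤ N → ghat (a + i * h) = g (a + i * h))
    (hder : ∀ i : ℕ, i ≤ N → deriv ghat (a + i * h) = deriv g (a + i * h)) :
    ∀ t ∈ Set.Icc a b, |ghat t - g t| ≤ (Mg + Mghat) * h ^ 2 / 8 :=
  sobolev_uniform_grid_general a b N hN h hh g ghat hg hghat Mg Mghat hMg hMghat hval hder
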